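/- The integral of ln(1+e^{-u})⁴ over u from 0 to ∞ equals (2/3)π²ln(2)³ − (21/2)ln(2)²ζ(3) − 24·ln(2)·Li₄(1/2) − (4/5)ln(2)⁵ − 24·Li₅(1/2) + 24ζ(5). -/

import Mathlib

open MeasureTheory Real

noncomputable def zetaVal (s : ℕ) : ℝ := ∑' k : ℕ, 1 / ((k : ℝ) + 1) ^ s

noncomputable def polylog (m : ℕ) (z : ℝ) : ℝ := ∑' k : ℕ, z ^ (k + 1) / ((k : ℝ) + 1) ^ m

noncomputable def harm (p k : ℕ) : ℝ := ∑ j ∈ Finset.range k, 1 / ((j : ℝ) + 1) ^ p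

/-!
The substitutions `t = e^{-u}` and then `x = 1/(1+t)` turn `∫₀^∞ log(1+e^{-u})ⁿ du` into
`∫_{1/2}^1 (-log x)ⁿ/(x(1-x)) dx`. Split `1/(x(1-x)) = 1/x + 1/(1-x)` and expand `1/(1-x)`
geometrically; repeated integration by parts evaluates each `∫_{1/2}^1 x^k (-log x)ⁿ dx`, and
summing over `k` gives, for `n ≥ 1`,
  `∫₀^∞ log(1+e^{-u})ⁿ du = (log 2)^{n+1}/(n+1) + n! ζ(n+1)
      - ∑_{j ≤ n} n!/(n-j)! (log 2)^{n-j} Li_{j+1}(1/2)`.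
For `n = 4` this is the claim once `Li₁(1/2) = log 2`, `Li₂(1/2)` and `Li₃(1/2)` are known. The
last two come from the same formula for `n = 1, 2`, compared with independent evaluations of
`∫₀¹ logⁿ(1+t)/t dt`: writing `log(1+t)` through `log(1-t)`, `log(1-t²)` and `log((1+t)/(1-t))`
reduces these to `∫₀¹ (-log u)ⁿ/(1-u^d) du = n! ∑_k (dk+1)^{-(n+1)}` for `d = 1, 2`, a sum of
Gamma integrals.
-/

open Set Filter
open scoped Nat

theorem integrable_and_integral_eq_of_hasSum_of_nonneg {α : Type*} [MeasurableSpace α]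
    {μ : Measure α} {f : ℕ → α → ℝ} {g : α → ℝ} {r : ℝ}
    (hf : ∀ n, Integrable (f n) μ) (hf_nonneg : ∀ n, 0 ≤ᵐ[μ] f n)
    (hg : ∀ᵐ x ∂μ, HasSum (fun n => f n x) (g x))
    (hr : HasSum (fun n => ∫ x, f n x ∂μ) r) :
    Integrable g μ ∧ ∫ x, g x ∂μ = r := by
  have hg_eq : g =ᵐ[μ] fun x => ∑' n, f n x := hg.mono fun x hx => hx.tsum_eq.symm
  have hr_nonneg : ∀ n, 0 ≤ ∫ x, f n x ∂μ := fun n => integral_nonneg_of_ae (hf_nonneg n)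
  have hlint : ∫⁻ x, ‖g x‖ₑ ∂μ = ENNReal.ofReal r := by
    have hpt : ∀ᵐ x ∂μ, ‖g x‖ₑ = ∑' n, ENNReal.ofReal (f n x) := by
      filter_upwards [hg, ae_all_iff.2 hf_nonneg] with x hx hx0
      rw [← ofReal_norm, Real.norm_of_nonneg (hx.nonneg hx0), ← hx.tsum_eq,
        ENNReal.ofReal_tsum_of_nonneg hx0 hx.summable]
    rw [lintegral_congr_ae hpt, lintegral_tsum fun n => (hf n).aemeasurable.ennreal_ofReal,
      ← hr.tsum_eq, ENNReal.ofReal_tsum_of_nonneg hr_nonneg hr.summable]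
    exact tsum_congr fun n => (ofReal_integral_eq_lintegral_ofReal (hf n) (hf_nonneg n)).symm
  have hmeas : AEStronglyMeasurable g μ :=
    aestronglyMeasurable_of_tendsto_ae atTop
      (fun n => Finset.aestronglyMeasurable_sum (Finset.range n) fun i _ => (hf i).1)
      (hg.mono fun x hx => by simpa only [Finset.sum_apply] using hx.tendsto_sum_nat)
  refine ⟨⟨hmeas, by rw [HasFiniteIntegral, hlint]; exact ENNReal.ofReal_lt_top⟩, ?_⟩
  have hnorm : Summable fun n => ∫ x, ‖f n x‖ ∂μ := by
    refine hr.summable.congr fun n => integral_congr_ae ?_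
    filter_upwards [hf_nonneg n] with x hx using (Real.norm_of_nonneg hx).symm
  rw [integral_congr_ae hg_eq, ← integral_tsum_of_summable_integral_norm hf hnorm, hr.tsum_eq]

theorem integral_eq_and_integrableOn_iff_of_bijOn {s t : Set ℝ} (hs : MeasurableSet s)
    {f f' g h : ℝ → ℝ} (hf : BijOn f s t) (hf' : ∀ x ∈ s, HasDerivWithinAt f (f' x) s x)
    (hgh : ∀ x ∈ s, |f' x| * g (f x) = h x) :
    (∫ y in t, g y = ∫ x in s, h x) ∧ (IntegrableOn g t ↔ IntegrableOn h s) := by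
  have heq : EqOn (fun x => |f' x| • g (f x)) h s := hgh
  rw [← hf.image_eq, integral_image_eq_integral_abs_deriv_smul hs hf' hf.injOn,
    integrableOn_image_iff_integrableOn_abs_deriv_smul hs hf' hf.injOn]
  exact ⟨setIntegral_congr_fun hs heq, integrableOn_congr_fun heq hs⟩

theorem summable_one_div_succ_pow {p : ℕ} (hp : 2 ≤ p) :
    Summable fun k : ℕ => 1 / ((k : ℝ) + 1) ^ p := by
  simpa using (summable_nat_add_iff 1).2 (Real.summable_one_div_nat_pow.2 hp)

theorem summable_pow_div_succ_pow {z : ℝ} (hz0 : 0 ≤ z) (hz1 : z < 1) (m : ℕ) :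
    Summable fun k : ℕ => z ^ (k + 1) / ((k : ℝ) + 1) ^ m := by
  refine Summable.of_nonneg_of_le (fun k => by positivity) (fun k => ?_)
    ((summable_geometric_of_lt_one hz0 hz1).mul_left z)
  rw [pow_succ', div_le_iff₀ (by positivity)]
  exact le_mul_of_one_le_right (by positivity) (one_le_pow₀ (by simp))

theorem hasSum_one_div_two_mul_add_one_pow {p : ℕ} (hp : 2 ≤ p) :
    HasSum (fun k : ℕ => 1 / (2 * (k : ℝ) + 1) ^ p) ((1 - 1 / 2 ^ p) * zetaVal p) := by
  have hz := summable_one_div_succ_pow hp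
  have heven : ∀ k : ℕ, 1 / (((2 * k : ℕ) : ℝ) + 1) ^ p = 1 / (2 * (k : ℝ) + 1) ^ p := by
    intro k; push_cast; rfl
  have hodd : ∀ k : ℕ,
      1 / (((2 * k + 1 : ℕ) : ℝ) + 1) ^ p = 1 / 2 ^ p * (1 / ((k : ℝ) + 1) ^ p) := by
    intro k
    push_cast
    rw [show 2 * (k : ℝ) + 1 + 1 = 2 * (k + 1) by ring, mul_pow]
    field_simp
  have hsum_even := (hz.comp_injective (mul_right_injective₀ two_ne_zero)).congr heven
  have hsplit := tsum_even_add_odd (f := fun k : ℕ => 1 / ((k : ℝ) + 1) ^ p)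
    (hz.comp_injective (mul_right_injective₀ two_ne_zero))
    (hz.comp_injective fun a b h => by simpa using h)
  simp only [heven, hodd, tsum_mul_left] at hsplit
  have hval : ∑' k : ℕ, 1 / (2 * (k : ℝ) + 1) ^ p = (1 - 1 / 2 ^ p) * zetaVal p := by
    rw [zetaVal]
    linear_combination hsplit
  exact hval ▸ hsum_even.hasSum

theorem bijOn_exp_neg_Ioi_zero : BijOn (fun v : ℝ => exp (-v)) (Ioi 0) (Ioo 0 1) := by
  have h := (exp_injective.comp neg_injective).injOn.bijOn_image (s := Ioi 0)
  rwa [Set.image_comp exp Neg.neg, Set.image_neg_Ioi, neg_zero, image_exp_Iio, exp_zero] at h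

theorem integral_exp_neg_substitution {g h : ℝ → ℝ}
    (hgh : ∀ v > 0, exp (-v) * g (exp (-v)) = h v) :
    (∫ x in Ioo 0 1, g x = ∫ v in Ioi 0, h v) ∧
      (IntegrableOn g (Ioo 0 1) ↔ IntegrableOn h (Ioi 0)) := by
  refine integral_eq_and_integrableOn_iff_of_bijOn measurableSet_Ioi bijOn_exp_neg_Ioi_zero
    (fun v _ => (hasDerivAt_neg v).exp.hasDerivWithinAt) fun v hv => ?_
  rw [mul_neg_one, abs_neg, abs_of_pos (exp_pos _)]
  exact hgh v hv

theorem integral_Ioo_pow_mul_neg_log_pow (k n : ℕ) :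
    IntegrableOn (fun x => x ^ k * (-log x) ^ n) (Ioo 0 1) ∧
      ∫ x in Ioo 0 1, x ^ k * (-log x) ^ n = n ! / ((k : ℝ) + 1) ^ (n + 1) := by
  have hk : (0 : ℝ) < k + 1 := by positivity
  have hsub := integral_exp_neg_substitution
    (g := fun x => x ^ k * (-log x) ^ n) (h := fun v => v ^ n * exp (-((k + 1) * v)))
    fun v _ => by
      rw [log_exp, neg_neg, ← exp_nat_mul, ← mul_assoc, ← exp_add, mul_comm]
      congr 2
      ring
  have hrpow : EqOn (fun v : ℝ => v ^ ((n + 1 : ℝ) - 1) * exp (-((k + 1) * v)))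
      (fun v => v ^ n * exp (-((k + 1) * v))) (Ioi 0) := fun v _ => by
    simp only [add_sub_cancel_right, rpow_natCast]
  refine ⟨hsub.2.2 ?_, ?_⟩
  · refine (integrableOn_rpow_mul_exp_neg_mul_rpow (s := n) (p := 1)
      (by linarith [n.cast_nonneg (α := ℝ)]) one_pos hk).congr_fun (fun v _ => ?_)
      measurableSet_Ioi
    simp only [rpow_natCast, rpow_one, neg_mul]
  · rw [hsub.1, ← setIntegral_congr_fun measurableSet_Ioi hrpow,
      integral_rpow_mul_exp_neg_mul_Ioi (by positivity) hk,
      Gamma_nat_eq_factorial, ← Nat.cast_add_one n, rpow_natCast, one_div_pow, div_mul_eq_mul_div,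
      one_mul]

theorem integral_Ioo_neg_log_pow_div_one_sub_pow {n d : ℕ} (hd : 0 < d) {S : ℝ}
    (hS : HasSum (fun k : ℕ => 1 / (((d * k : ℕ) : ℝ) + 1) ^ (n + 1)) S) :
    IntegrableOn (fun u => (-log u) ^ n / (1 - u ^ d)) (Ioo 0 1) ∧
      ∫ u in Ioo 0 1, (-log u) ^ n / (1 - u ^ d) = n ! * S := by
  refine integrable_and_integral_eq_of_hasSum_of_nonneg
    (f := fun k u => u ^ (d * k) * (-log u) ^ n)
    (fun k => (integral_Ioo_pow_mul_neg_log_pow (d * k) n).1) (fun k => ?_) ?_ ?_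
  · filter_upwards [ae_restrict_mem measurableSet_Ioo] with u hu
    have := log_neg hu.1 hu.2
    exact mul_nonneg (pow_nonneg hu.1.le _) (pow_nonneg (by linarith) _)
  · filter_upwards [ae_restrict_mem measurableSet_Ioo] with u hu
    have hud : u ^ d < 1 := pow_lt_one₀ hu.1.le hu.2 hd.ne'
    simpa only [← pow_mul, div_eq_inv_mul] using
      (hasSum_geometric_of_lt_one (pow_nonneg hu.1.le d) hud).mul_right ((-log u) ^ n)
  · refine (hS.mul_left (n ! : ℝ)).congr_fun fun k => ?_
    rw [(integral_Ioo_pow_mul_neg_log_pow (d * k) n).2, mul_one_div]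

theorem integral_Ioo_neg_log_pow_div_one_sub {n : ℕ} (hn : 1 ≤ n) :
    IntegrableOn (fun u => (-log u) ^ n / (1 - u)) (Ioo 0 1) ∧
      ∫ u in Ioo 0 1, (-log u) ^ n / (1 - u) = n ! * zetaVal (n + 1) := by
  simpa using integral_Ioo_neg_log_pow_div_one_sub_pow (n := n) (d := 1) one_pos
    (by simpa [zetaVal] using (summable_one_div_succ_pow (p := n + 1) (by omega)).hasSum)

theorem integral_Ioo_neg_log_pow_div_one_sub_sq {n : ℕ} (hn : 1 ≤ n) :
    IntegrableOn (fun u => (-log u) ^ n / (1 - u ^ 2)) (Ioo 0 1) ∧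
      ∫ u in Ioo 0 1, (-log u) ^ n / (1 - u ^ 2) =
        n ! * ((1 - 1 / 2 ^ (n + 1)) * zetaVal (n + 1)) := by
  refine integral_Ioo_neg_log_pow_div_one_sub_pow two_pos ?_
  push_cast
  exact hasSum_one_div_two_mul_add_one_pow (by omega)

theorem bijOn_one_sub_Ioo : BijOn (fun t : ℝ => 1 - t) (Ioo 0 1) (Ioo 0 1) := by
  have hmaps : MapsTo (fun t : ℝ => 1 - t) (Ioo 0 1) (Ioo 0 1) := fun t ht =>
    ⟨by linarith [ht.2], by linarith [ht.1]⟩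
  exact InvOn.bijOn ⟨fun t _ => sub_sub_cancel 1 t, fun t _ => sub_sub_cancel 1 t⟩ hmaps hmaps

theorem bijOn_sq_Ioo : BijOn (fun t : ℝ => t ^ 2) (Ioo 0 1) (Ioo 0 1) := by
  refine InvOn.bijOn (f' := Real.sqrt)
    ⟨fun t ht => sqrt_sq ht.1.le, fun t ht => sq_sqrt ht.1.le⟩
    (fun t ht => ⟨by have := ht.1; positivity, by nlinarith [ht.1, ht.2]⟩)
    fun t ht => ⟨sqrt_pos.2 ht.1, (sqrt_lt' one_pos).2 (by simpa using ht.2)⟩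

theorem bijOn_one_sub_div_one_add_Ioo :
    BijOn (fun t : ℝ => (1 - t) / (1 + t)) (Ioo 0 1) (Ioo 0 1) := by
  have hmaps : MapsTo (fun t : ℝ => (1 - t) / (1 + t)) (Ioo 0 1) (Ioo 0 1) := fun t ⟨h0, h1⟩ =>
    ⟨div_pos (by linarith) (by linarith), (div_lt_one (by linarith)).2 (by linarith)⟩
  have hinv : LeftInvOn (fun t : ℝ => (1 - t) / (1 + t)) (fun t => (1 - t) / (1 + t))
      (Ioo 0 1) := fun t ht => by
      have : 1 + t ≠ 0 := by linarith [ht.1]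
      field_simp
      ring
  exact InvOn.bijOn ⟨hinv, hinv⟩ hmaps hmaps

theorem integral_Ioo_neg_log_one_sub_pow_div {n : ℕ} (hn : 1 ≤ n) :
    IntegrableOn (fun t => (-log (1 - t)) ^ n / t) (Ioo 0 1) ∧
      ∫ t in Ioo 0 1, (-log (1 - t)) ^ n / t = n ! * zetaVal (n + 1) := by
  have hsub := integral_eq_and_integrableOn_iff_of_bijOn measurableSet_Ioo bijOn_one_sub_Ioo
    (fun t _ => ((hasDerivAt_id t).const_sub 1).hasDerivWithinAt)
    (g := fun u => (-log u) ^ n / (1 - u)) (h := fun t => (-log (1 - t)) ^ n / t)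
    fun t _ => by simp
  have hP := integral_Ioo_neg_log_pow_div_one_sub hn
  exact ⟨hsub.2.1 hP.1, hsub.1 ▸ hP.2⟩

theorem integral_Ioo_neg_log_one_sub_sq_pow_div {n : ℕ} (hn : 1 ≤ n) :
    IntegrableOn (fun t => (-log (1 - t ^ 2)) ^ n / t) (Ioo 0 1) ∧
      ∫ t in Ioo 0 1, (-log (1 - t ^ 2)) ^ n / t = n ! * zetaVal (n + 1) / 2 := by
  have hsub := integral_eq_and_integrableOn_iff_of_bijOn measurableSet_Ioo bijOn_sq_Ioo
    (fun t _ => (hasDerivAt_pow 2 t).hasDerivWithinAt)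
    (g := fun u => (-log (1 - u)) ^ n / u) (h := fun t => 2 * ((-log (1 - t ^ 2)) ^ n / t))
    fun t ht => by
      have := ht.1
      rw [abs_of_pos (by positivity)]
      field_simp
      ring
  have hP := integral_Ioo_neg_log_one_sub_pow_div hn
  refine ⟨IntegrableOn.congr_fun ((hsub.2.1 hP.1).const_mul (1 / 2)) (fun t _ => by ring)
    measurableSet_Ioo, ?_⟩
  rw [← hP.2, hsub.1, integral_const_mul]
  ring

theorem integral_Ioo_log_one_add_div_one_sub_pow_div {n : ℕ} (hn : 1 ≤ n) :
    IntegrableOn (fun t => (log ((1 + t) / (1 - t))) ^ n / t) (Ioo 0 1) ∧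
      ∫ t in Ioo 0 1, (log ((1 + t) / (1 - t))) ^ n / t =
        2 * n ! * ((1 - 1 / 2 ^ (n + 1)) * zetaVal (n + 1)) := by
  have hsub := integral_eq_and_integrableOn_iff_of_bijOn measurableSet_Ioo
    bijOn_one_sub_div_one_add_Ioo
    (fun t ht => (((hasDerivAt_id' t).const_sub 1).div ((hasDerivAt_id' t).const_add 1)
      (by linarith [ht.1])).hasDerivWithinAt)
    (g := fun w => (-log w) ^ n / (1 - w ^ 2))
    (h := fun t => (log ((1 + t) / (1 - t))) ^ n / t / 2)
    fun t ht => by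
      obtain ⟨h0, h1⟩ := ht
      have : 1 + t ≠ 0 := by linarith
      rw [← log_inv, inv_div, abs_of_neg (div_neg_of_neg_of_pos (by linarith) (by positivity)),
        show 1 - ((1 - t) / (1 + t)) ^ 2 = 4 * t / (1 + t) ^ 2 by field_simp; ring]
      generalize log ((1 + t) / (1 - t)) = L
      field_simp
      ring
  have hR := integral_Ioo_neg_log_pow_div_one_sub_sq hn
  refine ⟨IntegrableOn.congr_fun ((hsub.2.1 hR.1).mul_const 2) (fun t _ => by ring)
    measurableSet_Ioo, ?_⟩
  have h := hsub.1
  rw [hR.2, integral_div] at h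
  linarith

theorem log_one_sub_sq {t : ℝ} (h₁ : -1 < t) (h₂ : t < 1) :
    log (1 - t ^ 2) = log (1 - t) + log (1 + t) := by
  rw [show 1 - t ^ 2 = (1 - t) * (1 + t) by ring, log_mul (by linarith) (by linarith)]

theorem integral_Ioo_log_one_add_div : ∫ t in Ioo 0 1, log (1 + t) / t = zetaVal 2 / 2 := by
  have hP := integral_Ioo_neg_log_one_sub_pow_div (n := 1) le_rfl
  have hQ := integral_Ioo_neg_log_one_sub_sq_pow_div (n := 1) le_rfl
  have hpt : EqOn (fun t => log (1 + t) / t)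
      (fun t => (-log (1 - t)) ^ 1 / t - (-log (1 - t ^ 2)) ^ 1 / t) (Ioo 0 1) := fun t ht => by
    simp only [log_one_sub_sq (by linarith [ht.1]) ht.2]
    ring
  rw [setIntegral_congr_fun measurableSet_Ioo hpt, integral_sub hP.1 hQ.1, hP.2, hQ.2]
  norm_num
  ring

theorem integral_Ioo_log_one_add_sq_div :
    ∫ t in Ioo 0 1, log (1 + t) ^ 2 / t = zetaVal 3 / 4 := by
  have hP := integral_Ioo_neg_log_one_sub_pow_div (n := 2) one_le_two
  have hQ := integral_Ioo_neg_log_one_sub_sq_pow_div (n := 2) one_le_two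
  have hR := integral_Ioo_log_one_add_div_one_sub_pow_div (n := 2) one_le_two
  have hpt : EqOn (fun t => log (1 + t) ^ 2 / t)
      (fun t => (1 / 2 * ((-log (1 - t ^ 2)) ^ 2 / t) - (-log (1 - t)) ^ 2 / t)
        + 1 / 2 * (log ((1 + t) / (1 - t)) ^ 2 / t)) (Ioo 0 1) := fun t ht => by
    simp only [log_one_sub_sq (by linarith [ht.1]) ht.2,
      log_div (by linarith [ht.1] : 1 + t ≠ 0) (by linarith [ht.2] : 1 - t ≠ 0)]
    ring
  rw [setIntegral_congr_fun measurableSet_Ioo hpt,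
    integral_add (f := fun t => 1 / 2 * ((-log (1 - t ^ 2)) ^ 2 / t) - (-log (1 - t)) ^ 2 / t)
      ((hQ.1.const_mul _).sub hP.1) (hR.1.const_mul _),
    integral_sub (hQ.1.const_mul _) hP.1, integral_const_mul, integral_const_mul,
    hP.2, hQ.2, hR.2]
  norm_num
  ring

theorem intervalIntegrable_pow_mul_neg_log_pow {a : ℝ} (ha : 0 < a) (k n : ℕ) :
    IntervalIntegrable (fun x => x ^ k * (-log x) ^ n) volume a 1 := by
  refine ContinuousOn.intervalIntegrable fun x hx => ?_
  have hx0 : x ≠ 0 := (lt_of_lt_of_le (lt_min ha one_pos) hx.1).ne'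
  exact ((continuousAt_id.pow k).mul ((continuousAt_log hx0).neg.pow n)).continuousWithinAt

theorem integral_pow_mul_neg_log_pow_succ {a : ℝ} (ha : 0 < a) (k n : ℕ) :
    ((k : ℝ) + 1) * ∫ x in a..1, x ^ k * (-log x) ^ (n + 1) =
      (n + 1) * (∫ x in a..1, x ^ k * (-log x) ^ n) - a ^ (k + 1) * (-log a) ^ (n + 1) := by
  have hderiv : ∀ x ∈ uIcc a 1, HasDerivAt (fun x => x ^ (k + 1) * (-log x) ^ (n + 1))
      (((k : ℝ) + 1) * (x ^ k * (-log x) ^ (n + 1)) - (n + 1) * (x ^ k * (-log x) ^ n)) x := by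
    intro x hx
    have hx0 : x ≠ 0 := (lt_of_lt_of_le (lt_min ha one_pos) hx.1).ne'
    refine ((hasDerivAt_pow (k + 1) x).mul ((hasDerivAt_log hx0).neg.pow (n + 1))).congr_deriv ?_
    simp only [Pi.pow_apply, Pi.neg_apply, Nat.add_sub_cancel, Nat.cast_add_one]
    field_simp
    ring
  have hint := intervalIntegral.integral_eq_sub_of_hasDerivAt hderiv
    (((intervalIntegrable_pow_mul_neg_log_pow ha k (n + 1)).const_mul _).sub
      ((intervalIntegrable_pow_mul_neg_log_pow ha k n).const_mul _))
  rw [intervalIntegral.integral_sub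
      ((intervalIntegrable_pow_mul_neg_log_pow ha k (n + 1)).const_mul _)
      ((intervalIntegrable_pow_mul_neg_log_pow ha k n).const_mul _),
    intervalIntegral.integral_const_mul, intervalIntegral.integral_const_mul] at hint
  simp only [log_one, neg_zero, zero_pow (Nat.succ_ne_zero n), mul_zero, zero_sub] at hint
  linarith

theorem integral_pow_mul_neg_log_pow {a : ℝ} (ha : 0 < a) (k n : ℕ) :
    ∫ x in a..1, x ^ k * (-log x) ^ n =
      n ! * (1 / ((k : ℝ) + 1) ^ (n + 1)) - ∑ j ∈ Finset.range (n + 1),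
        (n.descFactorial j : ℝ) * (-log a) ^ (n - j) * (a ^ (k + 1) / ((k : ℝ) + 1) ^ (j + 1)) := by
  have hk : (k : ℝ) + 1 ≠ 0 := by positivity
  induction n with
  | zero =>
    simp only [pow_zero, mul_one, integral_pow, one_pow, Nat.factorial_zero, Nat.cast_one,
      zero_add, Finset.range_one, Finset.sum_singleton, Nat.descFactorial_zero, Nat.sub_self]
    field_simp
  | succ n ih =>
    have hrec := integral_pow_mul_neg_log_pow_succ ha k n
    set S := ∑ j ∈ Finset.range (n + 1),
      (n.descFactorial j : ℝ) * (-log a) ^ (n - j) * (a ^ (k + 1) / ((k : ℝ) + 1) ^ (j + 1))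
    have hsum : ∑ j ∈ Finset.range (n + 1), ((n + 1).descFactorial (j + 1) : ℝ) *
          (-log a) ^ (n + 1 - (j + 1)) * (a ^ (k + 1) / ((k : ℝ) + 1) ^ (j + 1 + 1)) =
        (n + 1) / ((k : ℝ) + 1) * S := by
      rw [Finset.mul_sum]
      refine Finset.sum_congr rfl fun j _ => ?_
      rw [Nat.succ_descFactorial_succ, Nat.add_sub_add_right]
      push_cast
      field_simp
      ring
    rw [Finset.sum_range_succ', hsum, ← mul_right_inj' hk, hrec, ih]
    clear_value S
    simp only [Nat.descFactorial_zero, Nat.sub_zero, Nat.factorial_succ, Nat.cast_mul,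
      Nat.cast_add_one]
    field_simp
    ring

theorem integral_Ioo_neg_log_pow_div_one_sub_of_pos {a : ℝ} (ha0 : 0 < a) (ha1 : a < 1)
    {n : ℕ} (hn : 1 ≤ n) :
    IntegrableOn (fun x => (-log x) ^ n / (1 - x)) (Ioo a 1) ∧
      ∫ x in Ioo a 1, (-log x) ^ n / (1 - x) = n ! * zetaVal (n + 1) -
        ∑ j ∈ Finset.range (n + 1),
          (n.descFactorial j : ℝ) * (-log a) ^ (n - j) * polylog (j + 1) a := by
  have hIoo : ∀ k, ∫ x in Ioo a 1, x ^ k * (-log x) ^ n = ∫ x in a..1, x ^ k * (-log x) ^ n :=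
    fun k => by rw [intervalIntegral.integral_of_le ha1.le, integral_Ioc_eq_integral_Ioo]
  refine integrable_and_integral_eq_of_hasSum_of_nonneg (f := fun k x => x ^ k * (-log x) ^ n)
    (fun k => ((intervalIntegrable_iff_integrableOn_Ioc_of_le ha1.le).1
      (intervalIntegrable_pow_mul_neg_log_pow ha0 k n)).mono_set Ioo_subset_Ioc_self)
    (fun k => ?_) ?_ ?_
  · filter_upwards [ae_restrict_mem measurableSet_Ioo] with x hx
    have := log_neg (ha0.trans hx.1) hx.2
    exact mul_nonneg (pow_nonneg (ha0.trans hx.1).le _) (pow_nonneg (by linarith) _)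
  · filter_upwards [ae_restrict_mem measurableSet_Ioo] with x hx
    simpa only [div_eq_inv_mul] using
      (hasSum_geometric_of_lt_one (ha0.trans hx.1).le hx.2).mul_right ((-log x) ^ n)
  · simp only [hIoo, integral_pow_mul_neg_log_pow ha0]
    refine ((summable_one_div_succ_pow (by omega : 2 ≤ n + 1)).hasSum.mul_left _).sub
      (hasSum_sum fun j _ => (summable_pow_div_succ_pow ha0.le ha1 (j + 1)).hasSum.mul_left _)

theorem integral_Ioo_neg_log_pow_div {a : ℝ} (ha0 : 0 < a) (ha1 : a ≤ 1) (n : ℕ) :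
    IntegrableOn (fun x => (-log x) ^ n / x) (Ioo a 1) ∧
      ∫ x in Ioo a 1, (-log x) ^ n / x = (-log a) ^ (n + 1) / (n + 1) := by
  have hcont : ContinuousOn (fun x => (-log x) ^ n / x) (uIcc a 1) := fun x hx => by
    have hx0 : x ≠ 0 := (lt_of_lt_of_le (lt_min ha0 one_pos) hx.1).ne'
    exact (((continuousAt_log hx0).neg.pow n).div continuousAt_id hx0).continuousWithinAt
  have hderiv : ∀ x ∈ uIcc a 1,
      HasDerivAt (fun x => -(-log x) ^ (n + 1) / (n + 1)) ((-log x) ^ n / x) x := fun x hx => by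
    have hx0 : x ≠ 0 := (lt_of_lt_of_le (lt_min ha0 one_pos) hx.1).ne'
    refine (((hasDerivAt_log hx0).neg.pow (n + 1)).neg.div_const _).congr_deriv ?_
    simp only [Pi.neg_apply, Nat.add_sub_cancel, Nat.cast_add_one]
    field_simp
  have hint := hcont.intervalIntegrable (μ := volume)
  refine ⟨((intervalIntegrable_iff_integrableOn_Ioc_of_le ha1).1 hint).mono_set
    Ioo_subset_Ioc_self, ?_⟩
  rw [← integral_Ioc_eq_integral_Ioo, ← intervalIntegral.integral_of_le ha1,
    intervalIntegral.integral_eq_sub_of_hasDerivAt hderiv hint]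
  simp [neg_div]

theorem integral_Ioo_neg_log_pow_div_mul_one_sub {a : ℝ} (ha0 : 0 < a) (ha1 : a < 1)
    {n : ℕ} (hn : 1 ≤ n) :
    ∫ x in Ioo a 1, (-log x) ^ n / (x * (1 - x)) = (-log a) ^ (n + 1) / (n + 1) +
      (n ! * zetaVal (n + 1) - ∑ j ∈ Finset.range (n + 1),
        (n.descFactorial j : ℝ) * (-log a) ^ (n - j) * polylog (j + 1) a) := by
  have h1 := integral_Ioo_neg_log_pow_div ha0 ha1.le n
  have h2 := integral_Ioo_neg_log_pow_div_one_sub_of_pos ha0 ha1 hn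
  have hpt : EqOn (fun x => (-log x) ^ n / (x * (1 - x)))
      (fun x => (-log x) ^ n / x + (-log x) ^ n / (1 - x)) (Ioo a 1) := fun x hx => by
    have : x ≠ 0 := (ha0.trans hx.1).ne'
    have : 1 - x ≠ 0 := by linarith [hx.2]
    field_simp
    ring
  rw [setIntegral_congr_fun measurableSet_Ioo hpt, integral_add h1.1 h2.1, h1.2, h2.2]

theorem bijOn_inv_one_add_Ioo :
    BijOn (fun t : ℝ => (1 + t)⁻¹) (Ioo 0 1) (Ioo (1 / 2) 1) := by
  refine InvOn.bijOn (f' := fun y => y⁻¹ - 1)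
    ⟨fun t ht => by simp, fun y hy => by simp⟩ (fun t ht => ⟨?_, ?_⟩) fun y hy => ⟨?_, ?_⟩
  · rw [one_div]; exact inv_strictAnti₀ (by linarith [ht.1]) (by linarith [ht.2])
  · exact inv_lt_one_of_one_lt₀ (by linarith [ht.1])
  · have := one_lt_inv₀ (by linarith [hy.1] : (0 : ℝ) < y) |>.2 hy.2
    linarith
  · have : y⁻¹ < 2 := by
      rw [inv_lt_comm₀ (by linarith [hy.1]) two_pos]; linarith [hy.1]
    linarith

theorem integral_Ioo_log_one_add_pow_div {n : ℕ} (hn : 1 ≤ n) :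
    ∫ t in Ioo 0 1, log (1 + t) ^ n / t = log 2 ^ (n + 1) / (n + 1) +
      (n ! * zetaVal (n + 1) - ∑ j ∈ Finset.range (n + 1),
        (n.descFactorial j : ℝ) * log 2 ^ (n - j) * polylog (j + 1) (1 / 2)) := by
  have hsub := integral_eq_and_integrableOn_iff_of_bijOn measurableSet_Ioo bijOn_inv_one_add_Ioo
    (fun t ht => (((hasDerivAt_id' t).const_add 1).inv (by linarith [ht.1])).hasDerivWithinAt)
    (g := fun x => (-log x) ^ n / (x * (1 - x))) (h := fun t => log (1 + t) ^ n / t)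
    fun t ht => by
      have : 1 + t ≠ 0 := by linarith [ht.1]
      have : t ≠ 0 := ht.1.ne'
      rw [log_inv, neg_neg, abs_div, abs_neg, abs_one, abs_of_pos (by positivity),
        show 1 - (1 + t)⁻¹ = t / (1 + t) by field_simp; ring]
      field_simp
  rw [← hsub.1, integral_Ioo_neg_log_pow_div_mul_one_sub (by norm_num) (by norm_num) hn]
  simp only [one_div, log_inv, neg_neg]

theorem integral_Ioi_log_one_add_exp_neg_pow (n : ℕ) :
    ∫ u in Ioi 0, log (1 + exp (-u)) ^ n = ∫ t in Ioo 0 1, log (1 + t) ^ n / t :=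
  (integral_exp_neg_substitution (g := fun t => log (1 + t) ^ n / t)
    fun _ _ => mul_div_cancel₀ _ (exp_pos _).ne').1.symm

theorem integral_log_one_add_exp_neg_pow {n : ℕ} (hn : 1 ≤ n) :
    ∫ u in Ioi 0, log (1 + exp (-u)) ^ n = log 2 ^ (n + 1) / (n + 1) +
      (n ! * zetaVal (n + 1) - ∑ j ∈ Finset.range (n + 1),
        (n.descFactorial j : ℝ) * log 2 ^ (n - j) * polylog (j + 1) (1 / 2)) := by
  rw [integral_Ioi_log_one_add_exp_neg_pow, integral_Ioo_log_one_add_pow_div hn]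

theorem zetaVal_two : zetaVal 2 = π ^ 2 / 6 := by
  rw [← hasSum_zeta_two.tsum_eq, hasSum_zeta_two.summable.tsum_eq_zero_add, zetaVal]
  simp

theorem polylog_one_half : polylog 1 (1 / 2) = log 2 := by
  have h := Real.hasSum_pow_div_log_of_abs_lt_one (x := (1 / 2 : ℝ)) (by norm_num [abs_of_pos])
  rw [show (1 : ℝ) - 1 / 2 = 2⁻¹ by norm_num, Real.log_inv, neg_neg] at h
  simpa [polylog] using h.tsum_eq

theorem polylog_two_half : polylog 2 (1 / 2) = π ^ 2 / 12 - log 2 ^ 2 / 2 := by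
  have h := integral_Ioo_log_one_add_pow_div (n := 1) le_rfl
  simp only [pow_one] at h
  rw [integral_Ioo_log_one_add_div] at h
  norm_num [Finset.sum_range_succ, polylog_one_half, zetaVal_two] at h
  linarith

theorem polylog_three_half :
    polylog 3 (1 / 2) = 7 / 8 * zetaVal 3 - π ^ 2 * log 2 / 12 + log 2 ^ 3 / 6 := by
  have h := integral_Ioo_log_one_add_pow_div (n := 2) one_le_two
  rw [integral_Ioo_log_one_add_sq_div] at h
  norm_num [Finset.sum_range_succ, polylog_one_half, polylog_two_half] at h
  linarith

theorem stmt8 : ∫ u in Set.Ioi (0:ℝ), (Real.log (1 + Real.exp (-u)))^4 = (2/3) * π^2 * (Real.log 2)^3 - (21/2) * (Real.log 2)^2 * zetaVal 3 - 24 * Real.log 2 * polylog 4 (1/2) - (4/5) * (Real.log 2)^5 - 24 * polylog 5 (1/2) + 24 * zetaVal 5 := by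
  rw [integral_log_one_add_exp_neg_pow (by norm_num)]
  norm_num [Finset.sum_range_succ, Nat.descFactorial, polylog_one_half, polylog_two_half,
    polylog_three_half]
  ring
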